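/- If q belongs to the class E, then the sum Σ_{k,l ∈ ℤ, k ≠ 0, l ≠ 0, k+l ≠ 0} C_k C_l C_{−k−l} / ( k(k+l) ) converges absolutely and equals 0. -/

import Mathlib

/-!
Write `F(k, l) = C_k C_l C_{-k-l} / (k (k + l))`. The numerator is invariant under the
bijections `(k, l) ↦ (l, k)` and `(k, l) ↦ (l, -(k + l))` of `ℤ²`, while the denominators give
`1/(k(k+l)) + 1/(l(k+l)) - 1/(kl) = 0`. Hence `F(k, l) + F(l, k) + F(l, -(k + l)) = 0`, and
summing over `ℤ²` shows that three times the sum vanishes. Absolute convergence comes from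
`|C_k| ≤ M / |k|`, which bounds `|F(k, l)|` by `M³ / (k² (k + l)²)`, a shear of the summable
`1 / (k² l²)`.
-/

open MeasureTheory Filter Asymptotics

/-- Cosine Fourier coefficients `C_k = (1/π) ∫₀^π q(x) cos(kx) dx`. -/
noncomputable def cosCoef (q : ℝ → ℂ) (k : ℤ) : ℂ :=
  (1 / (Real.pi : ℂ)) * ∫ x in (0:ℝ)..Real.pi, q x * Real.cos ((k : ℝ) * x)

lemma cosCoef_even (q : ℝ → ℂ) : Function.Even (cosCoef q) := by
  intro k
  simp [cosCoef]

lemma exists_norm_le_div_abs_of_isBigO {E : Type*} [NormedAddCommGroup E] {C : ℤ → E}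
    (hC : Function.Even C) (hO : (fun n : ℕ => C n) =O[atTop] fun n : ℕ => (1 : ℝ) / n) :
    ∃ M : ℝ, ∀ k : ℤ, k ≠ 0 → ‖C k‖ ≤ M / |(k : ℝ)| := by
  rw [← Nat.cofinite_eq_atTop] at hO
  obtain ⟨M, -, hM⟩ := bound_of_isBigO_cofinite hO
  refine ⟨M, fun k hk => ?_⟩
  have hCk : C k = C k.natAbs := by
    rcases Int.natAbs_eq k with h | h
    · rw [← h]
    · rw [h, hC, Int.natAbs_neg, Int.natAbs_natCast]
  have hk' : ((k.natAbs : ℕ) : ℝ) = |(k : ℝ)| := by simp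
  simpa [hCk, hk', div_eq_mul_inv] using hM (x := k.natAbs) (by simpa using hk)

section TripleSum

variable {𝕜 : Type*}

def tripleTerm [Field 𝕜] (C : ℤ → 𝕜) (kl : ℤ × ℤ) : 𝕜 :=
  if kl.1 ≠ 0 ∧ kl.2 ≠ 0 ∧ kl.1 + kl.2 ≠ 0 then
    C kl.1 * C kl.2 * C (-(kl.1 + kl.2)) / ((kl.1 : 𝕜) * ((kl.1 : 𝕜) + (kl.2 : 𝕜)))
  else 0

/-- Reading `(k, l)` as the zero-sum triple `(k, l, -(k + l))`, this is its cyclic shift. -/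
def zeroSumRotate : ℤ × ℤ ≃ ℤ × ℤ where
  toFun p := (p.2, -(p.1 + p.2))
  invFun p := (-(p.1 + p.2), p.1)
  left_inv p := by simp
  right_inv p := by simp

lemma tripleTerm_add_swap_add_rotate [Field 𝕜] [CharZero 𝕜] (C : ℤ → 𝕜) (k l : ℤ) :
    tripleTerm C (k, l) + tripleTerm C (l, k) + tripleTerm C (l, -(k + l)) = 0 := by
  unfold tripleTerm
  by_cases h : k ≠ 0 ∧ l ≠ 0 ∧ k + l ≠ 0
  · obtain ⟨hk, hl, hkl⟩ := h
    rw [if_pos ⟨hk, hl, hkl⟩, if_pos ⟨hl, hk, by omega⟩, if_pos ⟨hl, by omega, by omega⟩]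
    have hk' : (k : 𝕜) ≠ 0 := by exact_mod_cast hk
    have hl' : (l : 𝕜) ≠ 0 := by exact_mod_cast hl
    have hkl' : (k : 𝕜) + l ≠ 0 := by exact_mod_cast hkl
    rw [show -(l + k) = -(k + l) by ring, show -(l + -(k + l)) = k by ring,
      show ((-(k + l) : ℤ) : 𝕜) = -(k + l) by push_cast; ring,
      show (l : 𝕜) + -(k + l) = -k by ring, add_comm (l : 𝕜)]
    field_simp
    ring
  · rw [if_neg h, if_neg (by omega), if_neg (by omega)]
    simp

lemma norm_tripleTerm_le [RCLike 𝕜] {C : ℤ → 𝕜} {M : ℝ}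
    (hM : ∀ k : ℤ, k ≠ 0 → ‖C k‖ ≤ M / |(k : ℝ)|) (kl : ℤ × ℤ) :
    ‖tripleTerm C kl‖ ≤ M ^ 3 * (1 / (kl.1 : ℝ) ^ 2 * (1 / ((kl.1 + kl.2 : ℤ) : ℝ) ^ 2)) := by
  have hM0 : 0 ≤ M := by simpa using (norm_nonneg _).trans (hM 1 one_ne_zero)
  obtain ⟨k, l⟩ := kl
  unfold tripleTerm
  split_ifs with h
  · obtain ⟨hk, hl, hkl⟩ := h
    have hk' : 0 < |(k : ℝ)| := by positivity
    have hkl' : 0 < |((k + l : ℤ) : ℝ)| := by positivity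
    have hCl : ‖C l‖ ≤ M :=
      (hM l hl).trans (div_le_self hM0 (by exact_mod_cast Int.one_le_abs hl))
    have hCkl : ‖C (-(k + l))‖ ≤ M / |((k + l : ℤ) : ℝ)| := by
      simpa only [Int.cast_neg, abs_neg] using hM (-(k + l)) (by omega)
    have hden : ‖(k : 𝕜) * ((k : 𝕜) + (l : 𝕜))‖ = |(k : ℝ)| * |((k + l : ℤ) : ℝ)| := by
      rw [← Int.cast_add]
      simp only [norm_mul, ← RCLike.ofReal_intCast (K := 𝕜), RCLike.norm_ofReal]
    rw [norm_div, hden, norm_mul, norm_mul, div_le_iff₀ (by positivity)]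
    calc ‖C k‖ * ‖C l‖ * ‖C (-(k + l))‖
        ≤ M / |(k : ℝ)| * M * (M / |((k + l : ℤ) : ℝ)|) := by
          have hMk : 0 ≤ M / |(k : ℝ)| := div_nonneg hM0 (abs_nonneg _)
          exact mul_le_mul (mul_le_mul (hM k hk) hCl (norm_nonneg _) hMk) hCkl
            (norm_nonneg _) (mul_nonneg hMk hM0)
      _ = M ^ 3 * (1 / (k : ℝ) ^ 2 * (1 / ((k + l : ℤ) : ℝ) ^ 2)) *
            (|(k : ℝ)| * |((k + l : ℤ) : ℝ)|) := by
          rw [← sq_abs (k : ℝ), ← sq_abs ((k + l : ℤ) : ℝ)]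
          field_simp
  · simp only [norm_zero]
    positivity

lemma summable_one_div_sq_mul_one_div_add_sq :
    Summable fun kl : ℤ × ℤ => 1 / (kl.1 : ℝ) ^ 2 * (1 / ((kl.1 + kl.2 : ℤ) : ℝ) ^ 2) := by
  have h := Real.summable_one_div_int_pow.2 one_lt_two
  have hprod := h.mul_of_nonneg h (fun _ => by positivity) (fun _ => by positivity)
  exact (Equiv.prodShear (Equiv.refl ℤ) Equiv.addLeft).summable_iff.2 hprod

lemma summable_tripleTerm [RCLike 𝕜] {C : ℤ → 𝕜} {M : ℝ}
    (hM : ∀ k : ℤ, k ≠ 0 → ‖C k‖ ≤ M / |(k : ℝ)|) : Summable (tripleTerm C) :=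
  (summable_one_div_sq_mul_one_div_add_sq.mul_left _).of_norm_bounded (norm_tripleTerm_le hM)

end TripleSum

lemma tsum_eq_zero_of_add_comp_add_comp_eq_zero {α E : Type*} [AddCommGroup E]
    [TopologicalSpace E] [IsTopologicalAddGroup E] [T2Space E] [IsAddTorsionFree E]
    {F : α → E} (hF : Summable F) (e₁ e₂ : α ≃ α) (h : ∀ a, F a + F (e₁ a) + F (e₂ a) = 0) :
    ∑' a, F a = 0 := by
  have h₁ : Summable fun a => F (e₁ a) := e₁.summable_iff.2 hF
  have h₂ : Summable fun a => F (e₂ a) := e₂.summable_iff.2 hF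
  have h3 : 3 • ∑' a, F a = 3 • (0 : E) := by
    calc 3 • ∑' a, F a = ∑' a, F a + ∑' a, F (e₁ a) + ∑' a, F (e₂ a) := by
          rw [e₁.tsum_eq, e₂.tsum_eq]; abel
      _ = ∑' a, (F a + F (e₁ a) + F (e₂ a)) := by
          rw [(hF.add h₁).tsum_add h₂, hF.tsum_add h₁]
      _ = 3 • (0 : E) := by simp [h]
  exact nsmul_right_injective three_ne_zero h3

theorem stmt13_general (q : ℝ → ℂ)
    (hE : (fun n : ℕ => cosCoef q (n : ℤ)) =O[atTop] fun n : ℕ => (1 : ℝ) / n) :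
    Summable (fun kl : ℤ × ℤ =>
      if kl.1 ≠ 0 ∧ kl.2 ≠ 0 ∧ kl.1 + kl.2 ≠ 0 then
        cosCoef q kl.1 * cosCoef q kl.2 * cosCoef q (-(kl.1 + kl.2)) /
          ((kl.1 : ℂ) * ((kl.1 : ℂ) + (kl.2 : ℂ)))
      else 0) ∧
    (∑' kl : ℤ × ℤ,
      if kl.1 ≠ 0 ∧ kl.2 ≠ 0 ∧ kl.1 + kl.2 ≠ 0 then
        cosCoef q kl.1 * cosCoef q kl.2 * cosCoef q (-(kl.1 + kl.2)) /
          ((kl.1 : ℂ) * ((kl.1 : ℂ) + (kl.2 : ℂ)))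
      else 0) = 0 := by
  obtain ⟨M, hM⟩ := exists_norm_le_div_abs_of_isBigO (cosCoef_even q) hE
  have hsum : Summable (tripleTerm (cosCoef q)) := summable_tripleTerm hM
  refine ⟨hsum, tsum_eq_zero_of_add_comp_add_comp_eq_zero hsum (Equiv.prodComm ℤ ℤ)
    zeroSumRotate fun p => tripleTerm_add_swap_add_rotate _ p.1 p.2⟩

/-- If `q` belongs to the class `E` (i.e. `C_n = O(1/n)` and `C₀ = 0`),
then `Σ_{k,l ≠ 0, k+l ≠ 0} C_k C_l C_{−k−l} / (k(k+l))` converges absolutely and equals 0. -/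
theorem stmt13 (q : ℝ → ℂ)
    (hint : IntervalIntegrable q volume 0 Real.pi)
    (hC0 : cosCoef q 0 = 0)
    (hE : (fun n : ℕ => cosCoef q (n : ℤ)) =O[atTop] fun n : ℕ => (1 : ℝ) / n) :
    Summable (fun kl : ℤ × ℤ =>
      if kl.1 ≠ 0 ∧ kl.2 ≠ 0 ∧ kl.1 + kl.2 ≠ 0 then
        cosCoef q kl.1 * cosCoef q kl.2 * cosCoef q (-(kl.1 + kl.2)) /
          ((kl.1 : ℂ) * ((kl.1 : ℂ) + (kl.2 : ℂ)))
      else 0) ∧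
    (∑' kl : ℤ × ℤ,
      if kl.1 ≠ 0 ∧ kl.2 ≠ 0 ∧ kl.1 + kl.2 ≠ 0 then
        cosCoef q kl.1 * cosCoef q kl.2 * cosCoef q (-(kl.1 + kl.2)) /
          ((kl.1 : ℂ) * ((kl.1 : ℂ) + (kl.2 : ℂ)))
      else 0) = 0 :=
  stmt13_general q hE
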